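/- For fixed θ ∈ [0, π/2], the supremum over t ∈ (0,1) of γ_t(θ) = 1 - (1/(2·min{t,1-t}))·(1 - √(cos²θ + (2t-1)²·sin²θ)) equals cos θ, attained in the limit t → 0 or t → 1. -/
import Mathlib


noncomputable def gam (t θ : ℝ) : ℝ :=
  1 - (1 / (2 * min t (1 - t))) *
    (1 - Real.sqrt (Real.cos θ ^ 2 + (2 * t - 1) ^ 2 * Real.sin θ ^ 2))

theorem stmt17 (θ : ℝ) (hθ : θ ∈ Set.Icc 0 (Real.pi / 2)) :
    IsLUB {y : ℝ | ∃ t ∈ Set.Ioo (0:ℝ) 1, gam t θ = y} (Real.cos θ) := by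
  obtain ⟨h0, h1⟩ := hθ
  have hc0 : 0 ≤ Real.cos θ :=
    Real.cos_nonneg_of_mem_Icc ⟨by linarith [Real.pi_pos], h1⟩
  have hc1 : Real.cos θ ≤ 1 := Real.cos_le_one θ
  constructor
  · rintro y ⟨t, ⟨ht0, ht1⟩, rfl⟩
    set c := Real.cos θ with hc
    set m := |2 * t - 1| with hm
    have hm1 : m < 1 := by rw [hm, abs_lt]; constructor <;> linarith
    have hm0 : 0 ≤ m := abs_nonneg _
    have hrm : 2 * min t (1 - t) = 1 - m := by
      rcases le_total t (1/2) with h | h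
      · rw [min_eq_left (by linarith), hm, abs_of_nonpos (by linarith)]; ring
      · rw [min_eq_right (by linarith), hm, abs_of_nonneg (by linarith)]; ring
    have hs : Real.sin θ ^ 2 = 1 - c ^ 2 := by
      have := Real.sin_sq_add_cos_sq θ; linarith
    have hmt : (2 * t - 1) ^ 2 = m ^ 2 := (sq_abs _).symm
    have hq : Real.sqrt (c ^ 2 + (2 * t - 1) ^ 2 * Real.sin θ ^ 2)
        ≤ m + (1 - m) * c := by
      have hle : c ^ 2 + (2 * t - 1) ^ 2 * Real.sin θ ^ 2 ≤ (m + (1 - m) * c) ^ 2 := by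
        rw [hmt, hs]
        nlinarith [mul_nonneg (mul_nonneg hm0 (by linarith : (0:ℝ) ≤ 1 - m))
          (mul_nonneg hc0 (by linarith : (0:ℝ) ≤ 1 - c))]
      calc Real.sqrt (c ^ 2 + (2 * t - 1) ^ 2 * Real.sin θ ^ 2)
          ≤ Real.sqrt ((m + (1 - m) * c) ^ 2) := Real.sqrt_le_sqrt hle
        _ = m + (1 - m) * c := Real.sqrt_sq (by nlinarith)
    have hr0 : (0:ℝ) < 1 - m := by linarith
    unfold gam
    rw [hrm]
    rw [sub_le_iff_le_add, ← sub_le_iff_le_add']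
    rw [div_mul_eq_mul_div, one_mul, le_div_iff₀ hr0]
    nlinarith
  · rintro y hy
    refine hy ⟨1/2, ⟨by norm_num, by norm_num⟩, ?_⟩
    unfold gam
    have : (2 * (1/2 : ℝ) - 1) ^ 2 = 0 := by norm_num
    rw [this]
    have hmin : min (1/2 : ℝ) (1 - 1/2) = 1/2 := by norm_num
    rw [hmin]
    rw [zero_mul, add_zero, Real.sqrt_sq hc0]
    ring
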